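/- Suppose a group G acts geometrically on two CAT(0) spaces X and Y, let x₀ ∈ X, y₀ ∈ Y, and suppose condition (*) holds. If {g_i}, {h_i} ⊂ G are two sequences such that both {g_i x₀} and {h_i x₀} converge to the same point α ∈ ∂X in X ∪ ∂X, then the sequences {g_i y₀} and {h_i y₀} converge in Y ∪ ∂Y to the same point of ∂Y. Consequently the map φ̄ : ∂X → ∂Y sending α to the common limit is well-defined. -/

import Mathlib

open Metric Set Pointwise

/-- A unit-speed geodesic segment from `x` to `y` in a metric space. -/
structure GeoSeg (X : Type*) [MetricSpace X] (x y : X) where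
  toFun : ℝ → X
  source : toFun 0 = x
  target : toFun (dist x y) = y
  isom : ∀ ⦃s : ℝ⦄, s ∈ Set.Icc 0 (dist x y) → ∀ ⦃t : ℝ⦄, t ∈ Set.Icc 0 (dist x y) →
      dist (toFun s) (toFun t) = |s - t|

/-- A geodesic metric space: any two points are joined by a geodesic segment. -/
def GeodesicSpace (X : Type*) [MetricSpace X] : Prop :=
  ∀ x y : X, Nonempty (GeoSeg X x y)

/-- The point at arclength `s` on the Euclidean segment from `p` to `q`
(the comparison point in the Euclidean plane). -/
noncomputable def euclPt (p q : EuclideanSpace ℝ (Fin 2)) (s : ℝ) :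
    EuclideanSpace ℝ (Fin 2) :=
  p + (s / dist p q) • (q - p)

/-- A geodesic metric space is CAT(0) if every geodesic triangle satisfies the
comparison inequality: for a triangle with vertices `x, y, z`, sides `γ` (from `x` to `y`)
and `δ` (from `x` to `z`), a comparison triangle `x', y', z'` in the Euclidean plane
(same side lengths), and points on the two sides with their Euclidean comparison points,
the distance in `X` is at most the Euclidean distance of the comparison points. -/
def IsCAT0 (X : Type*) [MetricSpace X] : Prop :=
  GeodesicSpace X ∧
  ∀ (x y z : X) (γ : GeoSeg X x y) (δ : GeoSeg X x z)
    (x' y' z' : EuclideanSpace ℝ (Fin 2)),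
    dist x' y' = dist x y → dist x' z' = dist x z → dist y' z' = dist y z →
    ∀ ⦃s : ℝ⦄, s ∈ Set.Icc 0 (dist x y) → ∀ ⦃t : ℝ⦄, t ∈ Set.Icc 0 (dist x z) →
      dist (γ.toFun s) (δ.toFun t) ≤ dist (euclPt x' y' s) (euclPt x' z' t)

/-- A geodesic ray issuing from the basepoint `x₀`. In a proper CAT(0) space each point of
the boundary `∂X` is represented by a unique geodesic ray from `x₀`, so `RayFrom X x₀`
is identified with `∂X`. As a subtype of `ℝ → X` it inherits the topology of pointwise
convergence, which coincides with the cone topology on `∂X`. -/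
abbrev RayFrom (X : Type*) [MetricSpace X] (x₀ : X) : Type _ :=
  {ξ : ℝ → X // ξ 0 = x₀ ∧
    ∀ ⦃s : ℝ⦄, 0 ≤ s → ∀ ⦃t : ℝ⦄, 0 ≤ t → dist (ξ s) (ξ t) = |s - t|}

/-- Two rays (as functions) are asymptotic: the image of one lies in a bounded
neighborhood of the image of the other. -/
def Asymp {X : Type*} [MetricSpace X] (ξ ζ : ℝ → X) : Prop :=
  ∃ N : ℝ, ∀ t : ℝ, 0 ≤ t → ∃ s : ℝ, 0 ≤ s ∧ dist (ξ t) (ζ s) ≤ N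

/-- `x ∈ U(α; r, ε)` for `α` a boundary point given by the ray `ξ` from `x₀`:
`x ∉ B(x₀,r)` and `d(ξ(r), ξ_x(r)) < ε`, where `ξ_x` is the geodesic from `x₀` to `x`
(unique in a CAT(0) space, so we quantify over all of them). -/
def memU {X : Type*} [MetricSpace X] (x₀ : X) (ξ : ℝ → X) (r ε : ℝ) (x : X) : Prop :=
  r < dist x₀ x ∧ ∀ γ : GeoSeg X x₀ x, dist (ξ r) (γ.toFun r) < ε

/-- `x ∈ U(z; r, ε)` for a point `z ∈ X`: `x ∉ B(x₀,r)` and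
`d(ξ_z(r), ξ_x(r)) < ε` for the geodesics `ξ_z, ξ_x` from `x₀`. -/
def memUpt {X : Type*} [MetricSpace X] (x₀ z : X) (r ε : ℝ) (x : X) : Prop :=
  r < dist x₀ x ∧ ∀ γz : GeoSeg X x₀ z, ∀ γ : GeoSeg X x₀ x,
    dist (γz.toFun r) (γ.toFun r) < ε

/-- The sequence `x` is a Cauchy sequence in `X ∪ ∂X`: there is `ε₀ > 0` such that for
every `r > 0` there is `i₀` with `x i ∈ U(x i₀; r, ε₀)` for all `i ≥ i₀`. -/
def ConeCauchy {X : Type*} [MetricSpace X] (x₀ : X) (x : ℕ → X) : Prop :=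
  ∃ ε₀ > (0:ℝ), ∀ r > (0:ℝ), ∃ i₀ : ℕ, ∀ i ≥ i₀, memUpt x₀ (x i₀) r ε₀ (x i)

/-- The sequence `x` converges in `X ∪ ∂X` (cone topology) to the boundary point `α`,
represented by its geodesic ray from `x₀`: it is eventually in every basic
neighborhood `U(α; r, ε)`. -/
def ConvTo {X : Type*} [MetricSpace X] (x₀ : X) (x : ℕ → X) (α : RayFrom X x₀) : Prop :=
  ∀ ε > (0:ℝ), ∀ r > (0:ℝ), ∃ i₀ : ℕ, ∀ i ≥ i₀, memU x₀ α.1 r ε (x i)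

/-- The sequence `x` is unbounded in `X`. -/
def UnboundedSeq {X : Type*} [MetricSpace X] (x₀ : X) (x : ℕ → X) : Prop :=
  ∀ R : ℝ, ∃ i : ℕ, R < dist x₀ (x i)

/-- A geometric action: an action by isometries which is proper and cocompact. -/
def GeometricAction (G X : Type*) [Group G] [MetricSpace X] [MulAction G X] : Prop :=
  (∀ g : G, Isometry fun x : X => g • x) ∧
  (∀ K L : Set X, IsCompact K → IsCompact L → {g : G | (g • K) ∩ L ≠ ∅}.Finite) ∧
  ∃ K : Set X, IsCompact K ∧ ⋃ g : G, g • K = Set.univ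

/-- The geodesic segment `[x, z]` meets the closed ball `B(p, t)`. -/
def SegMeetsBall {X : Type*} [MetricSpace X] (x z p : X) (t : ℝ) : Prop :=
  ∃ γ : GeoSeg X x z, ∃ s ∈ Set.Icc (0:ℝ) (dist x z), dist (γ.toFun s) p ≤ t

/-- Condition (*) with constants `N, M`: `G·B(x₀,N) = X`, `G·B(y₀,M) = Y`, and for all
`g, a ∈ G`, if `[x₀, g x₀] ∩ B(a x₀, N) ≠ ∅` in `X` then `[y₀, g y₀] ∩ B(a y₀, M) ≠ ∅`
in `Y`. -/
def CondStar (G : Type*) {X Y : Type*} [Group G] [MetricSpace X] [MetricSpace Y]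
    [MulAction G X] [MulAction G Y] (x₀ : X) (y₀ : Y) (N M : ℝ) : Prop :=
  0 < N ∧ 0 < M ∧
  (⋃ g : G, g • Metric.closedBall x₀ N) = Set.univ ∧
  (⋃ g : G, g • Metric.closedBall y₀ M) = Set.univ ∧
  ∀ g a : G, SegMeetsBall x₀ (g • x₀) (a • x₀) N → SegMeetsBall y₀ (g • y₀) (a • y₀) M

/-- `lam, C` are quasi-isometry constants for the orbit map `g x₀ ↦ g y₀`:
`(1/λ) d_Y(g y₀, h y₀) − C ≤ d_X(g x₀, h x₀) ≤ λ d_Y(g y₀, h y₀) + C`. -/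
def QIconsts (G : Type*) {X Y : Type*} [Group G] [MetricSpace X] [MetricSpace Y]
    [MulAction G X] [MulAction G Y] (x₀ : X) (y₀ : Y) (lam C : ℝ) : Prop :=
  0 < lam ∧ 0 < C ∧ ∀ g h : G,
    (1 / lam) * dist (g • y₀) (h • y₀) - C ≤ dist (g • x₀) (h • x₀) ∧
    dist (g • x₀) (h • x₀) ≤ lam * dist (g • y₀) (h • y₀) + C

/-!
Interleaving the two sequences, it suffices to show that `c i • y₀` converges in `Y ∪ ∂Y`
whenever `c i • x₀` converges to a point `ξ` of `∂X`. Fix `R` and choose `a i` with `a i • x₀`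
within `N` of the point at distance `R` on `[x₀, c i • x₀]`; condition (*) puts `a i • y₀` within
`M` of `[y₀, c i • y₀]`. For large `i` the points `a i • x₀` stay near `ξ R`, so they are
uniformly close to each other and, for large `R`, far from `x₀`. Properness of both actions
transfers this to the `a i • y₀`: the geodesics `[y₀, c i • y₀]` pass within a fixed distance `D`
of each other at distance at least `T` from `y₀`, for every `T`. CAT(0) comparison then bounds
their distance at radius `r` by `2 r D / T`, so they converge on compacta to a geodesic ray, the
common limit.
-/

namespace GeoSeg

variable {Z : Type*} [MetricSpace Z] {x y : Z}

theorem dist_source_apply (γ : GeoSeg Z x y) {s : ℝ} (hs : s ∈ Icc 0 (dist x y)) :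
    dist x (γ.toFun s) = s := by
  have h := γ.isom ⟨le_rfl, dist_nonneg⟩ hs
  rwa [γ.source, zero_sub, abs_neg, abs_of_nonneg hs.1] at h

theorem dist_apply_target (γ : GeoSeg Z x y) {s : ℝ} (hs : s ∈ Icc 0 (dist x y)) :
    dist (γ.toFun s) y = dist x y - s := by
  have h := γ.isom hs ⟨dist_nonneg, le_rfl⟩
  rwa [γ.target, abs_of_nonpos (sub_nonpos.2 hs.2), neg_sub] at h

noncomputable def restrict (γ : GeoSeg Z x y) {s : ℝ} (hs : s ∈ Icc 0 (dist x y)) :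
    GeoSeg Z x (γ.toFun s) where
  toFun := γ.toFun
  source := γ.source
  target := by rw [γ.dist_source_apply hs]
  isom u hu v hv := by
    rw [γ.dist_source_apply hs] at hu hv
    exact γ.isom ⟨hu.1, hu.2.trans hs.2⟩ ⟨hv.1, hv.2.trans hs.2⟩

end GeoSeg

theorem dist_rayFrom_apply {X : Type*} [MetricSpace X] {x₀ : X} (ξ : RayFrom X x₀) {R : ℝ}
    (hR : 0 ≤ R) : dist x₀ (ξ.1 R) = R := by
  have h := ξ.2.2 le_rfl hR
  rwa [ξ.2.1, zero_sub, abs_neg, abs_of_nonneg hR] at h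

theorem exists_triangle_euclideanSpace {a b c : ℝ} (ha : 0 < a) (hab : c ≤ a + b)
    (hac : a ≤ b + c) (hbc : b ≤ a + c) :
    ∃ B C : EuclideanSpace ℝ (Fin 2), ‖B‖ = a ∧ ‖C‖ = b ∧ dist B C = c := by
  -- `C = (c₁, c₂)`, with `c₁` given by the law of cosines
  set c₁ := (a ^ 2 + b ^ 2 - c ^ 2) / (2 * a) with hc₁_def
  have hc₁ : c₁ ^ 2 ≤ b ^ 2 := by
    rw [div_pow, div_le_iff₀ (by positivity)]
    nlinarith [mul_nonneg (mul_nonneg (mul_nonneg (sub_nonneg.2 hab) (sub_nonneg.2 hac))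
      (sub_nonneg.2 hbc)) (by linarith : 0 ≤ a + b + c)]
  refine ⟨!₂[a, 0], !₂[c₁, √(b ^ 2 - c₁ ^ 2)], ?_, ?_, ?_⟩
  · simp [EuclideanSpace.norm_eq, ha.le]
  · simp [EuclideanSpace.norm_eq, Real.sq_sqrt (sub_nonneg.2 hc₁)]
    exact Real.sqrt_sq (by linarith)
  · simp [EuclideanSpace.dist_eq, Real.dist_eq, sq_abs, Real.sq_sqrt (sub_nonneg.2 hc₁)]
    rw [← Real.sqrt_sq (show 0 ≤ c by linarith)]
    congr 1
    rw [hc₁_def]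
    field_simp
    ring

theorem norm_div_norm_smul_sub_le {E : Type*} [NormedAddCommGroup E] [NormedSpace ℝ E]
    {u : E} (hu : u ≠ 0) (v : E) {r : ℝ} (hr : 0 ≤ r) :
    ‖(r / ‖u‖) • u - (r / ‖v‖) • v‖ ≤ 2 * r * ‖u - v‖ / ‖u‖ := by
  have hu' : 0 < ‖u‖ := norm_pos_iff.2 hu
  have hsecond : ‖(r / ‖u‖ - r / ‖v‖) • v‖ ≤ r * ‖u - v‖ / ‖u‖ := by
    rcases eq_or_ne v 0 with rfl | hv
    · simp only [smul_zero, norm_zero]; positivity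
    have hv' : ‖v‖ ≠ 0 := norm_ne_zero_iff.2 hv
    calc ‖(r / ‖u‖ - r / ‖v‖) • v‖ = |(r / ‖u‖ - r / ‖v‖) * ‖v‖| := by
          rw [norm_smul, abs_mul, abs_norm, Real.norm_eq_abs]
      _ = |r * (‖v‖ - ‖u‖) / ‖u‖| := by
          congr 1
          field_simp
      _ = r * |‖u‖ - ‖v‖| / ‖u‖ := by
          rw [abs_div, abs_mul, abs_of_nonneg hr, abs_norm, abs_sub_comm]
      _ ≤ r * ‖u - v‖ / ‖u‖ := by gcongr; exact abs_norm_sub_norm_le u v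
  calc ‖(r / ‖u‖) • u - (r / ‖v‖) • v‖
      = ‖(r / ‖u‖) • (u - v) + (r / ‖u‖ - r / ‖v‖) • v‖ := by
        rw [smul_sub, sub_smul, sub_add_sub_cancel]
    _ ≤ ‖(r / ‖u‖) • (u - v)‖ + ‖(r / ‖u‖ - r / ‖v‖) • v‖ := norm_add_le _ _
    _ ≤ r * ‖u - v‖ / ‖u‖ + r * ‖u - v‖ / ‖u‖ := by
        gcongr
        rw [norm_smul, Real.norm_of_nonneg (by positivity), div_mul_eq_mul_div]
    _ = 2 * r * ‖u - v‖ / ‖u‖ := by ring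

namespace IsCAT0

variable {Z : Type*} [MetricSpace Z] {z₀ p q : Z}

theorem dist_apply_le_of_endpoints (hZ : IsCAT0 Z) (γ : GeoSeg Z z₀ p) (δ : GeoSeg Z z₀ q)
    {r : ℝ} (hr : 0 ≤ r) (hrp : r ≤ dist z₀ p) (hrq : r ≤ dist z₀ q) :
    dist (γ.toFun r) (δ.toFun r) ≤ 2 * r * dist p q / dist z₀ p := by
  rcases hr.eq_or_lt with rfl | hr
  · rw [γ.source, δ.source, dist_self, mul_zero, zero_mul, zero_div]
  obtain ⟨B, C, hB, hC, hBC⟩ := exists_triangle_euclideanSpace (hr.trans_le hrp)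
    (dist_triangle_left p q z₀) (dist_triangle z₀ q p |>.trans_eq (by rw [dist_comm q p]))
    (dist_triangle z₀ p q)
  have hB0 : B ≠ 0 := by
    rintro rfl; rw [norm_zero] at hB; linarith
  have hcmp := hZ.2 z₀ p q γ δ 0 B C (by rw [dist_zero_left, hB]) (by rw [dist_zero_left, hC])
    (by rw [hBC]) ⟨hr.le, hrp⟩ ⟨hr.le, hrq⟩
  simp only [euclPt, zero_add, sub_zero, zero_sub, norm_neg, dist_eq_norm] at hcmp
  calc dist (γ.toFun r) (δ.toFun r) ≤ ‖(r / ‖B‖) • B - (r / ‖C‖) • C‖ := hcmp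
    _ ≤ 2 * r * ‖B - C‖ / ‖B‖ := norm_div_norm_smul_sub_le hB0 C hr.le
    _ = 2 * r * dist p q / dist z₀ p := by rw [← dist_eq_norm, hBC, hB]

theorem dist_apply_le (hZ : IsCAT0 Z) (γ : GeoSeg Z z₀ p) (δ : GeoSeg Z z₀ q)
    {r s t : ℝ} (hr : 0 ≤ r) (hrs : r ≤ s) (hs : s ≤ dist z₀ p) (hrt : r ≤ t)
    (ht : t ≤ dist z₀ q) :
    dist (γ.toFun r) (δ.toFun r) ≤ 2 * r * dist (γ.toFun s) (δ.toFun t) / s := by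
  have hs' : s ∈ Icc 0 (dist z₀ p) := ⟨hr.trans hrs, hs⟩
  have ht' : t ∈ Icc 0 (dist z₀ q) := ⟨hr.trans hrt, ht⟩
  have h := hZ.dist_apply_le_of_endpoints (γ.restrict hs') (δ.restrict ht') hr
    (by rwa [γ.dist_source_apply hs']) (by rwa [δ.dist_source_apply ht'])
  rwa [γ.dist_source_apply hs'] at h

theorem geoSeg_apply_eq (hZ : IsCAT0 Z) (γ δ : GeoSeg Z z₀ p) {r : ℝ} (hr : 0 ≤ r)
    (hrp : r ≤ dist z₀ p) : γ.toFun r = δ.toFun r := by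
  have h := hZ.dist_apply_le_of_endpoints γ δ hr hrp hrp
  rwa [dist_self, mul_zero, zero_div, dist_le_zero] at h

end IsCAT0

section ConeConvergence

open Filter

def interleave {α : Type*} (u v : ℕ → α) (n : ℕ) : α :=
  if n % 2 = 0 then u (n / 2) else v (n / 2)

variable {α : Type*} {u v : ℕ → α}

@[simp]
theorem interleave_two_mul (n : ℕ) : interleave u v (2 * n) = u n := by
  simp [interleave]

@[simp]
theorem interleave_two_mul_add_one (n : ℕ) : interleave u v (2 * n + 1) = v n := by
  rw [interleave, if_neg (by omega), show (2 * n + 1) / 2 = n by omega]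

theorem eventually_interleave {p : α → Prop} (hu : ∀ᶠ n in atTop, p (u n))
    (hv : ∀ᶠ n in atTop, p (v n)) : ∀ᶠ n in atTop, p (interleave u v n) := by
  have h2 := Nat.tendsto_div_const_atTop two_ne_zero
  filter_upwards [h2.eventually hu, h2.eventually hv] with n hun hvn
  unfold interleave
  split_ifs <;> assumption

variable {X : Type*} [MetricSpace X] {x₀ : X} {x : ℕ → X} {ξ : RayFrom X x₀}

theorem convTo_iff_eventually :
    ConvTo x₀ x ξ ↔ ∀ ε > (0 : ℝ), ∀ r > (0 : ℝ), ∀ᶠ i in atTop, memU x₀ ξ.1 r ε (x i) := by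
  simp only [ConvTo, eventually_atTop]

theorem ConvTo.comp_tendsto (hx : ConvTo x₀ x ξ) {φ : ℕ → ℕ} (hφ : Tendsto φ atTop atTop) :
    ConvTo x₀ (fun n => x (φ n)) ξ := by
  rw [convTo_iff_eventually] at hx ⊢
  exact fun ε hε r hr => hφ.eventually (hx ε hε r hr)

theorem ConvTo.interleave {f : α → X} (hu : ConvTo x₀ (fun n => f (u n)) ξ)
    (hv : ConvTo x₀ (fun n => f (v n)) ξ) : ConvTo x₀ (fun n => f (interleave u v n)) ξ := by
  rw [convTo_iff_eventually] at hu hv ⊢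
  exact fun ε hε r hr =>
    eventually_interleave (p := fun a => memU x₀ ξ.1 r ε (f a)) (hu ε hε r hr) (hv ε hε r hr)

end ConeConvergence

section RayLimit

open Filter Topology

variable {Y : Type*} [MetricSpace Y] {y₀ : Y} {y : ℕ → Y}

theorem exists_rayFrom_tendsto [CompleteSpace Y] (γ : ∀ i, GeoSeg Y y₀ (y i))
    (hfar : Tendsto (fun i => dist y₀ (y i)) atTop atTop)
    (hcauchy : ∀ r, 0 ≤ r → CauchySeq fun i => (γ i).toFun r) :
    ∃ β : RayFrom Y y₀, ∀ r, 0 ≤ r → Tendsto (fun i => (γ i).toFun r) atTop (𝓝 (β.1 r)) := by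
  have : Nonempty Y := ⟨y₀⟩
  have hlim : ∀ r, 0 ≤ r → Tendsto (fun i => (γ i).toFun r) atTop
      (𝓝 (limUnder atTop fun i => (γ i).toFun r)) :=
    fun r hr => (hcauchy r hr).tendsto_limUnder
  refine ⟨⟨fun r => limUnder atTop fun i => (γ i).toFun r, ?_, fun s hs t ht => ?_⟩, hlim⟩
  · refine tendsto_nhds_unique (hlim 0 le_rfl) ?_
    simp only [GeoSeg.source, tendsto_const_nhds]
  · refine tendsto_nhds_unique ((hlim s hs).dist (hlim t ht)) (tendsto_const_nhds.congr' ?_)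
    filter_upwards [hfar.eventually_ge_atTop (max s t)] with i hi
    exact ((γ i).isom ⟨hs, (le_max_left s t).trans hi⟩ ⟨ht, (le_max_right s t).trans hi⟩).symm

theorem IsCAT0.convTo_of_tendsto (hY : IsCAT0 Y) (γ : ∀ i, GeoSeg Y y₀ (y i))
    (hfar : Tendsto (fun i => dist y₀ (y i)) atTop atTop) {β : RayFrom Y y₀}
    (hβ : ∀ r, 0 ≤ r → Tendsto (fun i => (γ i).toFun r) atTop (𝓝 (β.1 r))) :
    ConvTo y₀ y β := by
  rw [convTo_iff_eventually]
  intro ε hε r hr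
  filter_upwards [hfar.eventually_gt_atTop r, (hβ r hr.le).eventually (ball_mem_nhds _ hε)]
    with i hri hβi
  exact ⟨hri, fun γ' => by rw [hY.geoSeg_apply_eq γ' (γ i) hr.le hri.le]; exact mem_ball'.1 hβi⟩

def FellowTravel (D : ℝ) (γ : ∀ i, GeoSeg Y y₀ (y i)) : Prop :=
  ∀ T : ℝ, ∃ i₀, ∀ i ≥ i₀, ∀ j ≥ i₀, ∃ s ∈ Icc T (dist y₀ (y i)), ∃ t ∈ Icc T (dist y₀ (y j)),
    dist ((γ i).toFun s) ((γ j).toFun t) ≤ D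

theorem FellowTravel.tendsto_dist {D : ℝ} {γ : ∀ i, GeoSeg Y y₀ (y i)}
    (hγ : FellowTravel D γ) : Tendsto (fun i => dist y₀ (y i)) atTop atTop := by
  refine tendsto_atTop.2 fun T => ?_
  obtain ⟨i₀, hi₀⟩ := hγ T
  filter_upwards [eventually_ge_atTop i₀] with i hi
  obtain ⟨s, hs, -⟩ := hi₀ i hi i hi
  exact hs.1.trans hs.2

theorem IsCAT0.cauchySeq_apply_of_fellowTravel (hY : IsCAT0 Y) {D : ℝ}
    {γ : ∀ i, GeoSeg Y y₀ (y i)} (hγ : FellowTravel D γ) {r : ℝ} (hr : 0 ≤ r) :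
    CauchySeq fun i => (γ i).toFun r := by
  refine Metric.cauchySeq_iff.2 fun ε hε => ?_
  set T := r + 1 + 2 * r * |D| / ε
  have hrT : r + 1 ≤ T := le_add_of_nonneg_right (by positivity)
  obtain ⟨i₀, hi₀⟩ := hγ T
  refine ⟨i₀, fun i hi j hj => ?_⟩
  obtain ⟨s, hs, t, ht, hst⟩ := hi₀ i hi j hj
  have hTs : 0 < T := by linarith
  calc dist ((γ i).toFun r) ((γ j).toFun r)
      ≤ 2 * r * dist ((γ i).toFun s) ((γ j).toFun t) / s :=
        hY.dist_apply_le (γ i) (γ j) hr (by linarith [hs.1]) hs.2 (by linarith [ht.1]) ht.2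
    _ ≤ 2 * r * |D| / T := by
        gcongr
        · exact hst.trans (le_abs_self D)
        · exact hs.1
    _ < ε := by
        rw [div_lt_iff₀ hTs]
        have : 2 * r * |D| / ε * ε = 2 * r * |D| := div_mul_cancel₀ _ hε.ne'
        nlinarith

theorem IsCAT0.exists_convTo_of_fellowTravel [CompleteSpace Y] (hY : IsCAT0 Y) {D : ℝ}
    {γ : ∀ i, GeoSeg Y y₀ (y i)} (hγ : FellowTravel D γ) : ∃ β : RayFrom Y y₀, ConvTo y₀ y β := by
  obtain ⟨β, hβ⟩ := exists_rayFrom_tendsto γ hγ.tendsto_dist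
    fun r hr => hY.cauchySeq_apply_of_fellowTravel hγ hr
  exact ⟨β, hY.convTo_of_tendsto γ hγ.tendsto_dist hβ⟩

end RayLimit

section GeometricAction

open Filter

variable {G Z : Type*} [Group G] [MetricSpace Z] [MulAction G Z]

theorem GeometricAction.isIsometricSMul (hGA : GeometricAction G Z) : IsIsometricSMul G Z :=
  ⟨hGA.1⟩

/-- The finitely many translates of `K` through `x` cover a neighbourhood of `x`: along a
sequence `u → x`, the compact set `{x} ∪ range u` meets only finitely many translates, and those
missing `x` are closed, so `u` eventually avoids them. -/
theorem GeometricAction.weaklyLocallyCompactSpace (hGA : GeometricAction G Z) :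
    WeaklyLocallyCompactSpace Z := by
  have := hGA.isIsometricSMul
  obtain ⟨-, hprop, K, hK, hcov⟩ := hGA
  refine ⟨fun x => ?_⟩
  set S := {g : G | g • K ∩ {x} ≠ ∅}
  refine ⟨⋃ g ∈ S, g • K, (hprop K {x} hK isCompact_singleton).isCompact_biUnion
    fun g _ => hK.smul g, ?_⟩
  refine eventually_mem_set.1 (eventually_iff_seq_eventually.2 fun u hu => ?_)
  set S' := {g : G | g • K ∩ insert x (range u) ≠ ∅}
  have hS' : S'.Finite := hprop K _ hK hu.isCompact_insert_range
  have havoid : ∀ᶠ n in atTop, ∀ g ∈ S', g ∉ S → u n ∉ g • K := by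
    refine hS'.eventually_all.2 fun g _ => ?_
    by_cases hg : g ∈ S
    · exact Eventually.of_forall fun _ h => absurd hg h
    · have hx : x ∉ g • K := inter_singleton_eq_empty.1 (not_not.1 hg)
      filter_upwards [hu.eventually ((hK.smul g).isClosed.isOpen_compl.mem_nhds hx)]
        with n hn _ using hn
  filter_upwards [havoid] with n hn
  obtain ⟨g, hg⟩ := mem_iUnion.1 (hcov.symm ▸ mem_univ (u n))
  have hgS' : g ∈ S' := nonempty_iff_ne_empty.1 ⟨u n, hg, mem_insert_of_mem _ (mem_range_self n)⟩
  exact mem_biUnion (by_contra fun hgS => hn g hgS' hgS hg) hg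

theorem GeometricAction.exists_isCompact_closedBall (hGA : GeometricAction G Z) :
    ∃ η > 0, ∀ z : Z, IsCompact (closedBall z η) := by
  have := hGA.weaklyLocallyCompactSpace
  have := hGA.isIsometricSMul
  obtain ⟨-, -, K, hK, hcov⟩ := hGA
  obtain ⟨η, hη, hKη⟩ := hK.exists_isCompact_cthickening
  refine ⟨η, hη, fun z => ?_⟩
  obtain ⟨g, k, hk, rfl⟩ := mem_iUnion.1 (hcov.symm ▸ mem_univ z)
  change IsCompact (closedBall (g • k) η)
  rw [← Metric.smul_closedBall]
  exact (hKη.of_isClosed_subset isClosed_closedBall (closedBall_subset_cthickening hk η)).smul g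

theorem GeodesicSpace.exists_mem_closedBall_dist_le (hZ : GeodesicSpace Z) {z w : Z}
    {ρ δ : ℝ} (hρ : 0 ≤ ρ) (hδ : 0 ≤ δ) (hw : dist z w ≤ ρ + δ) :
    ∃ u ∈ closedBall z ρ, dist u w ≤ δ := by
  rcases le_or_gt (dist z w) ρ with h | h
  · exact ⟨w, mem_closedBall'.2 h, by rwa [dist_self]⟩
  · obtain ⟨σ⟩ := hZ z w
    have hρ' : ρ ∈ Icc 0 (dist z w) := ⟨hρ, h.le⟩
    refine ⟨σ.toFun ρ, mem_closedBall'.2 (σ.dist_source_apply hρ').le, ?_⟩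
    rw [σ.dist_apply_target hρ']
    linarith

/-- Balls of radius `(n + 1) η / 2` are covered by finitely many balls of radius `η` centred in
the ball of radius `n η / 2`. -/
theorem GeodesicSpace.properSpace_of_isCompact_closedBall (hZ : GeodesicSpace Z) {η : ℝ}
    (hη : 0 < η) (h : ∀ z : Z, IsCompact (closedBall z η)) : ProperSpace Z := by
  have hgrow : ∀ n : ℕ, ∀ z : Z, IsCompact (closedBall z (n * (η / 2))) := by
    intro n
    induction n with
    | zero => simp
    | succ n ih =>
      intro z
      obtain ⟨t, -, ht, hcover⟩ := (ih z).elim_finite_subcover_image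
        (fun y _ => isOpen_ball (ε := η / 2))
        fun y hy => mem_biUnion hy (mem_ball_self (by positivity))
      refine (ht.isCompact_biUnion fun y _ => h y).of_isClosed_subset isClosed_closedBall
        fun w hw => ?_
      obtain ⟨u, hu, huw⟩ := hZ.exists_mem_closedBall_dist_le (z := z) (w := w)
        (ρ := n * (η / 2)) (δ := η / 2)
        (by positivity) (by positivity) (by rw [mem_closedBall'] at hw; push_cast at hw; linarith)
      obtain ⟨y, hy, huy⟩ := mem_iUnion₂.1 (hcover hu)
      refine mem_biUnion hy (mem_closedBall.2 ?_)
      linarith [dist_triangle w u y, mem_ball.1 huy, dist_comm u w]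
  refine ⟨fun z r => ?_⟩
  obtain ⟨n, hn⟩ := exists_nat_ge (r / (η / 2))
  exact (hgrow n z).of_isClosed_subset isClosed_closedBall
    (closedBall_subset_closedBall ((div_le_iff₀ (by positivity)).1 hn))

theorem GeometricAction.properSpace (hGA : GeometricAction G Z) (hZ : GeodesicSpace Z) :
    ProperSpace Z := by
  obtain ⟨η, hη, h⟩ := hGA.exists_isCompact_closedBall
  exact hZ.properSpace_of_isCompact_closedBall hη h

theorem GeometricAction.finite_setOf_dist_smul_le [ProperSpace Z] (hGA : GeometricAction G Z)
    (z₀ : Z) (R : ℝ) : {g : G | dist z₀ (g • z₀) ≤ R}.Finite :=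
  (hGA.2.1 {z₀} (closedBall z₀ R) isCompact_singleton (isCompact_closedBall z₀ R)).subset
    fun g hg => nonempty_iff_ne_empty.1
      ⟨g • z₀, by rw [smul_set_singleton]; rfl, mem_closedBall'.2 hg⟩

theorem GeometricAction.exists_forall_dist_smul_le [ProperSpace Z] {Y : Type*} [MetricSpace Y]
    [MulAction G Y] (hGA : GeometricAction G Z) (z₀ : Z) (y₀ : Y) (R : ℝ) :
    ∃ L, ∀ g : G, dist z₀ (g • z₀) ≤ R → dist y₀ (g • y₀) ≤ L := by
  obtain ⟨L, hL⟩ := ((hGA.finite_setOf_dist_smul_le z₀ R).image fun g => dist y₀ (g • y₀)).bddAbove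
  exact ⟨L, fun g hg => hL (mem_image_of_mem _ hg)⟩

end GeometricAction

section CondStar

variable {G X Y : Type*} [Group G] [MetricSpace X] [MetricSpace Y] [MulAction G X]
  [MulAction G Y] {x₀ : X} {y₀ : Y}

theorem dist_smul_smul_eq_dist_inv_mul_smul [IsIsometricSMul G X] (a b : G) (x : X) :
    dist (a • x) (b • x) = dist x ((a⁻¹ * b) • x) := by
  rw [← dist_smul a⁻¹, inv_smul_smul, smul_smul]

theorem CondStar.exists_shadow {N M : ℝ} (hstar : CondStar G x₀ y₀ N M) [IsIsometricSMul G X]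
    (hX : GeodesicSpace X) (hY : IsCAT0 Y) {g : G} (γ : GeoSeg Y y₀ (g • y₀)) {ξ : ℝ → X}
    {R ε : ℝ} (hR : 0 ≤ R) (hg : memU x₀ ξ R ε (g • x₀)) :
    ∃ a : G, ∃ s ∈ Icc 0 (dist y₀ (g • y₀)),
      dist (ξ R) (a • x₀) < N + ε ∧ dist (γ.toFun s) (a • y₀) ≤ M := by
  obtain ⟨-, -, hcovX, -, himp⟩ := hstar
  obtain ⟨σ⟩ := hX x₀ (g • x₀)
  obtain ⟨a, ha⟩ := mem_iUnion.1 (hcovX.symm ▸ mem_univ (σ.toFun R))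
  rw [Metric.smul_closedBall, mem_closedBall] at ha
  obtain ⟨δ, s, hs, hδs⟩ := himp g a ⟨σ, R, ⟨hR, hg.1.le⟩, ha⟩
  refine ⟨a, s, hs, ?_, ?_⟩
  · linarith [dist_triangle (ξ R) (σ.toFun R) (a • x₀), hg.2 σ]
  · rwa [hY.geoSeg_apply_eq γ δ hs.1 hs.2]

theorem exists_convTo_smul_of_convTo [ProperSpace X] [ProperSpace Y] (hX : GeodesicSpace X)
    (hY : IsCAT0 Y) (hGX : GeometricAction G X) (hGY : GeometricAction G Y) {N M : ℝ}
    (hstar : CondStar G x₀ y₀ N M) {c : ℕ → G} {ξ : RayFrom X x₀}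
    (hc : ConvTo x₀ (fun i => c i • x₀) ξ) :
    ∃ β : RayFrom Y y₀, ConvTo y₀ (fun i => c i • y₀) β := by
  have := hGX.isIsometricSMul
  have := hGY.isIsometricSMul
  obtain ⟨L, hL⟩ := hGX.exists_forall_dist_smul_le x₀ y₀ (2 * N + 2)
  let γ i : GeoSeg Y y₀ (c i • y₀) := (hY.1 y₀ (c i • y₀)).some
  refine hY.exists_convTo_of_fellowTravel (γ := γ) (D := 2 * M + L) fun T => ?_
  obtain ⟨R₁, hR₁⟩ := hGY.exists_forall_dist_smul_le y₀ x₀ (T + M)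
  set R := |R₁| + N + 2 with hR_def
  have hR : 0 < R := by linarith [abs_nonneg R₁, hstar.1]
  obtain ⟨i₀, hi₀⟩ := hc 1 one_pos R hR
  have hshadow : ∀ i ≥ i₀, ∃ a : G, ∃ s ∈ Icc T (dist y₀ (c i • y₀)),
      dist (ξ.1 R) (a • x₀) < N + 1 ∧ dist ((γ i).toFun s) (a • y₀) ≤ M := by
    intro i hi
    obtain ⟨a, s, hs, hξa, hγa⟩ := hstar.exists_shadow hX hY (γ i) hR.le (hi₀ i hi)
    refine ⟨a, s, ⟨?_, hs.2⟩, hξa, hγa⟩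
    have hfar : T + M < dist y₀ (a • y₀) := by
      by_contra! h
      linarith [hR₁ a h, dist_triangle_right x₀ (ξ.1 R) (a • x₀), le_abs_self R₁,
        dist_rayFrom_apply ξ hR.le]
    have hs₀ : s ∈ Icc 0 (dist y₀ (c i • y₀)) := ⟨hs.1.trans' (by linarith), hs.2⟩
    linarith [dist_triangle y₀ ((γ i).toFun s) (a • y₀), (γ i).dist_source_apply hs₀]
  refine ⟨i₀, fun i hi j hj => ?_⟩
  obtain ⟨a, s, hs, hξa, hγa⟩ := hshadow i hi
  obtain ⟨b, t, ht, hξb, hγb⟩ := hshadow j hj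
  have hab : dist (a • y₀) (b • y₀) ≤ L := by
    rw [dist_smul_smul_eq_dist_inv_mul_smul]
    refine hL _ ?_
    rw [← dist_smul_smul_eq_dist_inv_mul_smul]
    linarith [dist_triangle_left (a • x₀) (b • x₀) (ξ.1 R)]
  refine ⟨s, hs, t, ht, ?_⟩
  linarith [dist_triangle4 ((γ i).toFun s) (a • y₀) (b • y₀) ((γ j).toFun t),
    dist_comm ((γ j).toFun t) (b • y₀)]

end CondStar

/-- Under condition (*), if `{g_i x₀}` and `{h_i x₀}` both converge in
`X ∪ ∂X` to the same boundary point `α`, then `{g_i y₀}` and `{h_i y₀}` converge in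
`Y ∪ ∂Y` to the same boundary point of `∂Y`; hence `φ̄ : ∂X → ∂Y` is well-defined. -/
theorem stmt3 {G X Y : Type*} [Group G] [MetricSpace X] [MetricSpace Y]
    [MulAction G X] [MulAction G Y]
    (hX : IsCAT0 X) (hY : IsCAT0 Y)
    (hGX : GeometricAction G X) (hGY : GeometricAction G Y)
    (x₀ : X) (y₀ : Y) (hstar : ∃ N M : ℝ, CondStar G x₀ y₀ N M)
    (g h : ℕ → G) (α : RayFrom X x₀)
    (hg : ConvTo x₀ (fun i => g i • x₀) α)
    (hh : ConvTo x₀ (fun i => h i • x₀) α) :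
    ∃ β : RayFrom Y y₀,
      ConvTo y₀ (fun i => g i • y₀) β ∧ ConvTo y₀ (fun i => h i • y₀) β := by
  obtain ⟨N, M, hstar⟩ := hstar
  have := hGX.properSpace hX.1
  have := hGY.properSpace hY.1
  obtain ⟨β, hβ⟩ := exists_convTo_smul_of_convTo hX.1 hY hGX hGY hstar
    (hg.interleave (f := (· • x₀)) hh)
  refine ⟨β, ?_, ?_⟩
  · simpa using hβ.comp_tendsto (φ := fun n => 2 * n)
      (Filter.tendsto_atTop_mono (fun n => show n ≤ 2 * n by omega) Filter.tendsto_id)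
  · simpa using hβ.comp_tendsto (φ := fun n => 2 * n + 1)
      (Filter.tendsto_atTop_mono (fun n => show n ≤ 2 * n + 1 by omega) Filter.tendsto_id)
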